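/- arXiv:2601.10482 — 3 statements merged into one kernel-verified Lean document; each statement's English description precedes it below -/
import Mathlib

section
/- The generalised Schur complement map on positive semidefinite block matrices, f(Q) = Q_A − Q_C Q_B† Q_Cᵀ (where Q has blocks Q_A, Q_C; Q_Cᵀ, Q_B and † denotes the Moore–Penrose pseudoinverse), is matrix concave: for positive semidefinite Q₁, Q₂ and λ ∈ [0,1], f(λ Q₁ + (1−λ) Q₂) ⪰ λ f(Q₁) + (1−λ) f(Q₂) in the Loewner order. -/
/-!
For `Q = [[A, C], [Cᵀ, B]] ⪰ 0` and any `X`, the congruence `[I, -X] Q [I, -X]ᵀ` exceeds the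
Schur complement `A - C B† Cᵀ` by `(X - C B†) B (X - C B†)ᵀ ⪰ 0`; this uses the range condition
`C B† B = C`. So the Schur complement is the Loewner minimum over `X` of maps that are linear in
`Q`, attained at `X = C B†`. Taking `X = C_λ B_λ†` for the convex combination `Q_λ` gives
`f(Q_λ) = λ [I, -X] Q₁ [I, -X]ᵀ + (1 - λ) [I, -X] Q₂ [I, -X]ᵀ ⪰ λ f(Q₁) + (1 - λ) f(Q₂)`.
-/

open Matrix

/-- `B` is the Moore–Penrose pseudoinverse of `A` (the four Penrose conditions). -/
def IsMoorePenrose {m n : Type*} [Fintype m] [Fintype n]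
    (A : Matrix m n ℝ) (B : Matrix n m ℝ) : Prop :=
  A * B * A = A ∧ B * A * B = B ∧ (A * B)ᵀ = A * B ∧ (B * A)ᵀ = B * A

open scoped MatrixOrder ComplexOrder

namespace IsMoorePenrose

variable {m n : Type*} [Fintype m] [Fintype n] {A : Matrix m n ℝ} {B C : Matrix n m ℝ}

theorem transpose (h : IsMoorePenrose A B) : IsMoorePenrose Aᵀ Bᵀ := by
  obtain ⟨h₁, h₂, h₃, h₄⟩ := h
  refine ⟨?_, ?_, ?_, ?_⟩
  · rw [← transpose_mul, ← transpose_mul, ← Matrix.mul_assoc, h₁]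
  · rw [← transpose_mul, ← transpose_mul, ← Matrix.mul_assoc, h₂]
  · rw [← transpose_mul, transpose_transpose, h₄]
  · rw [← transpose_mul, transpose_transpose, h₃]

theorem unique (hB : IsMoorePenrose A B) (hC : IsMoorePenrose A C) : B = C := by
  obtain ⟨hB₁, hB₂, hB₃, hB₄⟩ := hB
  obtain ⟨hC₁, hC₂, hC₃, hC₄⟩ := hC
  have hAB : A * B = A * C := by
    calc A * B = (A * C * A * B)ᵀ := by rw [hC₁, hB₃]
    _ = (A * B)ᵀ * (A * C)ᵀ := by simp only [transpose_mul, Matrix.mul_assoc]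
    _ = A * C := by rw [hB₃, hC₃, ← Matrix.mul_assoc, hB₁]
  have hBA : B * A = C * A := by
    calc B * A = (B * (A * C * A))ᵀ := by rw [hC₁, hB₄]
    _ = (C * A)ᵀ * (B * A)ᵀ := by simp only [transpose_mul, Matrix.mul_assoc]
    _ = C * A := by rw [hB₄, hC₄, Matrix.mul_assoc, ← Matrix.mul_assoc A, hB₁]
  calc B = B * A * B := hB₂.symm
  _ = C * A * C := by rw [hBA, Matrix.mul_assoc, hAB, ← Matrix.mul_assoc]
  _ = C := hC₂

theorem transpose_eq_self {A B : Matrix n n ℝ} (hA : Aᵀ = A) (h : IsMoorePenrose A B) :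
    Bᵀ = B :=
  (hA ▸ h.transpose).unique h

end IsMoorePenrose

namespace Matrix

variable {m n : Type*}

theorem PosSemidef.of_fromBlocks₂₂ {𝕜 : Type*} [RCLike 𝕜] {A : Matrix m m 𝕜}
    {C : Matrix m n 𝕜} {D : Matrix n m 𝕜} {B : Matrix n n 𝕜}
    (h : (fromBlocks A C D B).PosSemidef) : B.PosSemidef :=
  h.submatrix Sum.inr

variable [Fintype n]

theorem PosSemidef.mul_eq_zero_of_conjTranspose_mul_mul_eq_zero {𝕜 : Type*} [RCLike 𝕜]
    {Q : Matrix n n 𝕜} (hQ : Q.PosSemidef) (K : Matrix n m 𝕜) (h : Kᴴ * Q * K = 0) :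
    Q * K = 0 := by
  classical
  obtain ⟨M, rfl⟩ := CStarAlgebra.nonneg_iff_eq_star_mul_self.mp hQ.nonneg
  have hMK : M * K = 0 := by
    rwa [← conjTranspose_mul_self_eq_zero, conjTranspose_mul, Matrix.mul_assoc,
      ← Matrix.mul_assoc _ M, ← Matrix.mul_assoc, ← star_eq_conjTranspose]
  rw [Matrix.mul_assoc, hMK, Matrix.mul_zero]

variable [Fintype m] {A : Matrix m m ℝ} {C : Matrix m n ℝ} {B B' : Matrix n n ℝ}

theorem PosSemidef.mul_pinv_mul_eq_of_fromBlocks [DecidableEq n]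
    (h : (fromBlocks A C Cᵀ B).PosSemidef) (hB : IsMoorePenrose B B') : C * B' * B = C := by
  have hBP : B * (1 - B' * B) = 0 := by
    rw [Matrix.mul_sub, Matrix.mul_one, ← Matrix.mul_assoc, hB.1, sub_self]
  -- `K = [0; I - B†B]` has `Kᵀ Q K = (I - B†B)ᵀ B (I - B†B) = 0`, and the top block of `Q K` is
  -- `C (I - B†B)`.
  have hQK := h.mul_eq_zero_of_conjTranspose_mul_mul_eq_zero (fromRows 0 (1 - B' * B)) (by
    rw [Matrix.mul_assoc, fromBlocks_mul_fromRows, hBP,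
      conjTranspose_fromRows_eq_fromCols_conjTranspose, fromCols_mul_fromRows]
    simp)
  rw [fromBlocks_mul_fromRows, hBP] at hQK
  rw [← fromRows_zero, fromRows_ext_iff, Matrix.mul_zero, zero_add, Matrix.mul_sub, Matrix.mul_one,
    sub_eq_zero] at hQK
  rw [Matrix.mul_assoc, ← hQK.1]

variable [DecidableEq m]

theorem fromCols_one_neg_mul_fromBlocks_mul_transpose (X : Matrix m n ℝ) :
    fromCols (1 : Matrix m m ℝ) (-X) * fromBlocks A C Cᵀ B *
        (fromCols (1 : Matrix m m ℝ) (-X))ᵀ = A - X * Cᵀ - C * Xᵀ + X * B * Xᵀ := by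
  rw [fromCols_mul_fromBlocks, transpose_fromCols, fromCols_mul_fromRows]
  simp only [Matrix.one_mul, Matrix.transpose_one, Matrix.mul_one, Matrix.neg_mul,
    Matrix.transpose_neg, Matrix.mul_neg, Matrix.add_mul]
  abel

theorem fromCols_one_neg_mul_pinv_mul_fromBlocks_mul_transpose (hBsymm : Bᵀ = B)
    (hB : IsMoorePenrose B B') :
    fromCols (1 : Matrix m m ℝ) (-(C * B')) * fromBlocks A C Cᵀ B *
        (fromCols (1 : Matrix m m ℝ) (-(C * B')))ᵀ = A - C * B' * Cᵀ := by
  have hB'symm : B'ᵀ = B' := hB.transpose_eq_self hBsymm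
  have hpinv : C * B' * B * (B' * Cᵀ) = C * B' * Cᵀ := by
    rw [← Matrix.mul_assoc, Matrix.mul_assoc C B' B, Matrix.mul_assoc C (B' * B) B', hB.2.1]
  rw [fromCols_one_neg_mul_fromBlocks_mul_transpose, transpose_mul, hB'symm, hpinv]
  simp only [Matrix.mul_assoc]
  abel

theorem sub_mul_pinv_mul_transpose_le_fromCols_mul_fromBlocks [DecidableEq n]
    (h : (fromBlocks A C Cᵀ B).PosSemidef) (hB : IsMoorePenrose B B') (X : Matrix m n ℝ) :
    A - C * B' * Cᵀ ≤ fromCols (1 : Matrix m m ℝ) (-X) * fromBlocks A C Cᵀ B *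
        (fromCols (1 : Matrix m m ℝ) (-X))ᵀ := by
  have hBpsd := h.of_fromBlocks₂₂
  have hBsymm : Bᵀ = B := hBpsd.isHermitian
  have hB'symm : B'ᵀ = B' := hB.transpose_eq_self hBsymm
  have hrange := h.mul_pinv_mul_eq_of_fromBlocks hB
  have hrange' : B * (B' * Cᵀ) = Cᵀ := by
    simpa only [transpose_mul, hB'symm, hBsymm, Matrix.mul_assoc] using congrArg transpose hrange
  have hexcess : A - X * Cᵀ - C * Xᵀ + X * B * Xᵀ - (A - C * B' * Cᵀ)
      = (X - C * B') * B * (X - C * B')ᵀ := by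
    rw [Matrix.sub_mul, hrange, transpose_sub, transpose_mul, hB'symm, Matrix.sub_mul,
      Matrix.mul_sub, Matrix.mul_sub, Matrix.mul_assoc X B (B' * Cᵀ), hrange']
    simp only [Matrix.mul_assoc]
    abel
  rw [le_iff, fromCols_one_neg_mul_fromBlocks_mul_transpose, hexcess]
  simpa using hBpsd.mul_mul_conjTranspose_same (X - C * B')

end Matrix

/-- Matrix concavity of the generalised Schur complement
`f(Q) = Q_A − Q_C Q_B† Q_Cᵀ` on positive semidefinite block matrices. -/
theorem schurComplement_matrix_concave {p q : ℕ}
    (QA₁ QA₂ : Matrix (Fin p) (Fin p) ℝ)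
    (QC₁ QC₂ : Matrix (Fin p) (Fin q) ℝ)
    (QB₁ QB₂ : Matrix (Fin q) (Fin q) ℝ)
    (B₁ B₂ Bl : Matrix (Fin q) (Fin q) ℝ)
    (l : ℝ) (hl : l ∈ Set.Icc (0 : ℝ) 1)
    (h₁ : (Matrix.fromBlocks QA₁ QC₁ QC₁ᵀ QB₁).PosSemidef)
    (h₂ : (Matrix.fromBlocks QA₂ QC₂ QC₂ᵀ QB₂).PosSemidef)
    (hB₁ : IsMoorePenrose QB₁ B₁) (hB₂ : IsMoorePenrose QB₂ B₂)
    (hBl : IsMoorePenrose (l • QB₁ + (1 - l) • QB₂) Bl) :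
    ((l • QA₁ + (1 - l) • QA₂ -
        (l • QC₁ + (1 - l) • QC₂) * Bl * (l • QC₁ + (1 - l) • QC₂)ᵀ) -
      (l • (QA₁ - QC₁ * B₁ * QC₁ᵀ) + (1 - l) • (QA₂ - QC₂ * B₂ * QC₂ᵀ))).PosSemidef := by
  obtain ⟨hl₀, hl₁⟩ := hl
  have hQB₁ : QB₁ᵀ = QB₁ := h₁.of_fromBlocks₂₂.isHermitian
  have hQB₂ : QB₂ᵀ = QB₂ := h₂.of_fromBlocks₂₂.isHermitian
  have hQBl : (l • QB₁ + (1 - l) • QB₂)ᵀ = l • QB₁ + (1 - l) • QB₂ := by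
    rw [transpose_add, transpose_smul, transpose_smul, hQB₁, hQB₂]
  set M := fromCols (1 : Matrix (Fin p) (Fin p) ℝ) (-((l • QC₁ + (1 - l) • QC₂) * Bl))
  rw [← le_iff]
  calc l • (QA₁ - QC₁ * B₁ * QC₁ᵀ) + (1 - l) • (QA₂ - QC₂ * B₂ * QC₂ᵀ)
      ≤ l • (M * fromBlocks QA₁ QC₁ QC₁ᵀ QB₁ * Mᵀ) +
          (1 - l) • (M * fromBlocks QA₂ QC₂ QC₂ᵀ QB₂ * Mᵀ) :=
        add_le_add
          (smul_le_smul_of_nonneg_left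
            (sub_mul_pinv_mul_transpose_le_fromCols_mul_fromBlocks h₁ hB₁ _) hl₀)
          (smul_le_smul_of_nonneg_left
            (sub_mul_pinv_mul_transpose_le_fromCols_mul_fromBlocks h₂ hB₂ _) (sub_nonneg.2 hl₁))
    _ = M * fromBlocks (l • QA₁ + (1 - l) • QA₂) (l • QC₁ + (1 - l) • QC₂)
          (l • QC₁ + (1 - l) • QC₂)ᵀ (l • QB₁ + (1 - l) • QB₂) * Mᵀ := by
        rw [transpose_add, transpose_smul, transpose_smul, ← fromBlocks_add, ← fromBlocks_smul,
          ← fromBlocks_smul, Matrix.mul_add, Matrix.add_mul, Matrix.mul_smul, Matrix.mul_smul,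
          Matrix.smul_mul, Matrix.smul_mul]
    _ = _ := fromCols_one_neg_mul_pinv_mul_fromBlocks_mul_transpose hQBl hBl
end

section
/- Let A and B be real matrices with the same number of rows. The generalised Schur complement Aᵀ A − Aᵀ B (Bᵀ B)† Bᵀ A is singular if and only if the column spaces of A and B have nontrivial intersection (equivalently, some nonzero linear combination of columns of A lies in the span of the columns of B), provided A has full column rank. -/
open Matrix
/-- Uniqueness of the Moore–Penrose pseudoinverse. -/
lemma isMoorePenrose_unique {n : Type*} [Fintype n]
    (S X Y : Matrix n n ℝ) (hX : IsMoorePenrose S X) (hY : IsMoorePenrose S Y) :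
    X = Y := by
  obtain ⟨hX1, hX2, hX3, hX4⟩ := hX
  obtain ⟨hY1, hY2, hY3, hY4⟩ := hY
  have hSt : Sᵀ = Sᵀ * Yᵀ * Sᵀ := by
    conv_lhs => rw [← hY1]
    simp [transpose_mul, mul_assoc]
  have hSX : S * X = S * Y := by
    calc S * X = (S*X)ᵀ := hX3.symm
    _ = Xᵀ * Sᵀ := by rw [transpose_mul]
    _ = Xᵀ * (Sᵀ * Yᵀ * Sᵀ) := by rw [← hSt]
    _ = (Xᵀ * Sᵀ) * (Yᵀ * Sᵀ) := by simp only [mul_assoc]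
    _ = (S*X)ᵀ * (S*Y)ᵀ := by rw [transpose_mul, transpose_mul]
    _ = (S*X) * (S*Y) := by rw [hX3, hY3]
    _ = (S*X*S)*Y := by simp only [mul_assoc]
    _ = S*Y := by rw [hX1]
  have hXS : X * S = Y * S := by
    calc X * S = (X*S)ᵀ := hX4.symm
    _ = Sᵀ * Xᵀ := by rw [transpose_mul]
    _ = (Sᵀ * Yᵀ * Sᵀ) * Xᵀ := by rw [← hSt]
    _ = (Sᵀ * Yᵀ) * (Sᵀ * Xᵀ) := by simp only [mul_assoc]
    _ = (Y*S)ᵀ * (X*S)ᵀ := by rw [transpose_mul, transpose_mul]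
    _ = (Y*S) * (X*S) := by rw [hX4, hY4]
    _ = Y*(S*X*S) := by simp only [mul_assoc]
    _ = Y*S := by rw [hX1]
  calc X = X*S*X := hX2.symm
  _ = Y*S*X := by rw [hXS]
  _ = Y*(S*X) := by rw [mul_assoc]
  _ = Y*(S*Y) := by rw [hSX]
  _ = Y*S*Y := by rw [mul_assoc]
  _ = Y := hY2
/-- For `A` of full column rank, the generalised Schur complement
`Aᵀ A − Aᵀ B (Bᵀ B)† Bᵀ A` is singular iff the column spaces of `A` and `B`
intersect nontrivially. -/
theorem schurComplement_singular_iff_columnSpaces_intersect {m p q : ℕ}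
    (A : Matrix (Fin m) (Fin p) ℝ) (B : Matrix (Fin m) (Fin q) ℝ)
    (hA : Function.Injective A.mulVec)
    (P : Matrix (Fin q) (Fin q) ℝ) (hP : IsMoorePenrose (Bᵀ * B) P) :
    (∃ x : Fin p → ℝ, x ≠ 0 ∧ (Aᵀ * A - Aᵀ * B * P * Bᵀ * A) *ᵥ x = 0) ↔
      (∃ (a : Fin p → ℝ) (b : Fin q → ℝ), A *ᵥ a ≠ 0 ∧ A *ᵥ a = B *ᵥ b) := by
  obtain ⟨h1, h2, h3, h4⟩ := hP
  -- P is symmetric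
  have hPsymm : Pᵀ = P := by
    apply isMoorePenrose_unique (Bᵀ * B) Pᵀ P _ ⟨h1, h2, h3, h4⟩
    refine ⟨?_, ?_, ?_, ?_⟩
    · calc Bᵀ*B*Pᵀ*(Bᵀ*B) = ((Bᵀ*B)*P*(Bᵀ*B))ᵀ := by
            simp [transpose_mul, mul_assoc]
      _ = Bᵀ*B := by rw [h1, transpose_mul, transpose_transpose]
    · calc Pᵀ*(Bᵀ*B)*Pᵀ = (P*(Bᵀ*B)*P)ᵀ := by
            simp [transpose_mul, mul_assoc]
      _ = Pᵀ := by rw [h2]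
    · calc ((Bᵀ*B)*Pᵀ)ᵀ = P * (Bᵀ*B) := by simp [transpose_mul, mul_assoc]
      _ = (P*(Bᵀ*B))ᵀ := h4.symm
      _ = (Bᵀ*B)*Pᵀ := by simp [transpose_mul, mul_assoc]
    · calc (Pᵀ*(Bᵀ*B))ᵀ = (Bᵀ*B) * P := by simp [transpose_mul, mul_assoc]
      _ = ((Bᵀ*B)*P)ᵀ := h3.symm
      _ = Pᵀ*(Bᵀ*B) := by simp [transpose_mul, mul_assoc]
  -- reassociated versions of the Penrose identities
  have h1' : Bᵀ*(B*(P*(Bᵀ*B))) = Bᵀ*B := by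
    simpa [Matrix.mul_assoc] using h1
  have h2c : ∀ {k : ℕ} (C : Matrix (Fin q) (Fin k) ℝ),
      P*(Bᵀ*(B*(P*C))) = P*C := by
    intro k C
    calc P*(Bᵀ*(B*(P*C))) = (P*(Bᵀ*B)*P)*C := by simp only [Matrix.mul_assoc]
    _ = P*C := by rw [h2]
  -- key fact: B P Bᵀ B = B
  have hBPB : B * P * Bᵀ * B = B := by
    have hz : (B * P * Bᵀ * B - B)ᵀ * (B * P * Bᵀ * B - B) = 0 := by
      have e : (B * P * Bᵀ * B - B)ᵀ = Bᵀ*B*P*Bᵀ - Bᵀ := by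
        simp [transpose_sub, transpose_mul, hPsymm, Matrix.mul_assoc]
      rw [e]
      simp only [Matrix.sub_mul, Matrix.mul_sub, Matrix.mul_assoc, h2c, h1']
      abel
    have hz' : (B * P * Bᵀ * B - B)ᴴ * (B * P * Bᵀ * B - B) = 0 := by
      rw [conjTranspose_eq_transpose_of_trivial]; exact hz
    exact sub_eq_zero.mp (Matrix.conjTranspose_mul_self_eq_zero.mp hz')
  -- the Schur complement is a Gram matrix
  have key : Aᵀ * A - Aᵀ * B * P * Bᵀ * A
      = (A - B*P*Bᵀ*A)ᵀ * (A - B*P*Bᵀ*A) := by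
    have ht : (A - B*P*Bᵀ*A)ᵀ = Aᵀ - Aᵀ*(B*(P*Bᵀ)) := by
      simp [transpose_sub, transpose_mul, hPsymm, Matrix.mul_assoc]
    rw [ht]
    simp only [Matrix.sub_mul, Matrix.mul_sub, Matrix.mul_assoc, h2c]
    abel
  constructor
  · rintro ⟨x, hx0, hx⟩
    rw [key] at hx
    set N := A - B*P*Bᵀ*A with hN
    have hNx : N *ᵥ x = 0 := by
      have h0 : (N *ᵥ x) ⬝ᵥ (N *ᵥ x) = 0 := by
        calc (N *ᵥ x) ⬝ᵥ (N *ᵥ x) = (x ᵥ* Nᵀ) ⬝ᵥ (N *ᵥ x) := by rw [vecMul_transpose]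
        _ = x ⬝ᵥ (Nᵀ *ᵥ (N *ᵥ x)) := (dotProduct_mulVec _ _ _).symm
        _ = x ⬝ᵥ ((Nᵀ*N) *ᵥ x) := by rw [mulVec_mulVec]
        _ = 0 := by rw [hx, dotProduct_zero]
      exact dotProduct_self_eq_zero.mp h0
    have hAx : A *ᵥ x = B *ᵥ ((P*Bᵀ*A) *ᵥ x) := by
      have := sub_eq_zero.mp (by rw [hN, sub_mulVec] at hNx; exact hNx)
      rw [this, mulVec_mulVec]
      simp only [Matrix.mul_assoc]
    refine ⟨x, (P*Bᵀ*A) *ᵥ x, ?_, hAx⟩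
    intro h
    exact hx0 (hA (by rw [h, mulVec_zero]))
  · rintro ⟨a, b, hne, heq⟩
    have ha0 : a ≠ 0 := by
      intro h; apply hne; rw [h, mulVec_zero]
    refine ⟨a, ha0, ?_⟩
    have t2 : (Aᵀ*B*P*Bᵀ*A) *ᵥ a = (Aᵀ*A) *ᵥ a := by
      calc (Aᵀ*B*P*Bᵀ*A) *ᵥ a = (Aᵀ*B*P*Bᵀ) *ᵥ (A *ᵥ a) := by rw [mulVec_mulVec]
      _ = (Aᵀ*B*P*Bᵀ) *ᵥ (B *ᵥ b) := by rw [heq]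
      _ = (Aᵀ*B*P*Bᵀ*B) *ᵥ b := by rw [mulVec_mulVec]
      _ = (Aᵀ*(B*P*Bᵀ*B)) *ᵥ b := by
            simp only [Matrix.mul_assoc]
      _ = (Aᵀ*B) *ᵥ b := by rw [hBPB]
      _ = Aᵀ *ᵥ (B *ᵥ b) := by rw [← mulVec_mulVec]
      _ = Aᵀ *ᵥ (A *ᵥ a) := by rw [heq]
      _ = (Aᵀ*A) *ᵥ a := by rw [mulVec_mulVec]
    rw [sub_mulVec, t2, sub_self]
end

section
/- Let F be a symmetric positive definite d×d matrix and O a d×d real orthogonal matrix with rows o_n. Suppose μ ∈ ℝ^d satisfies (o_nᵀ μ)² ≥ o_nᵀ F o_n for every row n, and the diagonal entries of F satisfy F_{nn} = μ_n². Then (o_nᵀ μ)² = o_nᵀ F o_n for every n. -/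
open Matrix

/-- If every row `o_n` of an orthogonal matrix satisfies `(o_nᵀ μ)² ≥ o_nᵀ F o_n`
and the diagonal of the symmetric positive definite `F` is `F_{nn} = μ_n²`,
then every inequality is an equality. -/
theorem orthogonal_quadratic_equalities {d : ℕ}
    (F : Matrix (Fin d) (Fin d) ℝ) (hF : F.PosDef)
    (O : Matrix (Fin d) (Fin d) ℝ) (hO : Oᵀ * O = 1)
    (μ : Fin d → ℝ)
    (hge : ∀ n, (O n) ⬝ᵥ (F *ᵥ (O n)) ≤ ((O n) ⬝ᵥ μ) ^ 2)
    (hdiag : ∀ n, F n n = (μ n) ^ 2) :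
    ∀ n, ((O n) ⬝ᵥ μ) ^ 2 = (O n) ⬝ᵥ (F *ᵥ (O n)) := by
  have h1 : ∑ n, ((O n) ⬝ᵥ μ) ^ 2 = μ ⬝ᵥ μ := by
    have : ∑ n, ((O n) ⬝ᵥ μ) ^ 2 = (O *ᵥ μ) ⬝ᵥ (O *ᵥ μ) := by
      simp [dotProduct, mulVec, sq]
    rw [this]
    calc (O *ᵥ μ) ⬝ᵥ (O *ᵥ μ) = μ ⬝ᵥ (Oᵀ *ᵥ (O *ᵥ μ)) := by
          rw [Matrix.dotProduct_mulVec, Matrix.mulVec_transpose, dotProduct_comm]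
      _ = μ ⬝ᵥ ((Oᵀ * O) *ᵥ μ) := by rw [Matrix.mulVec_mulVec]
      _ = μ ⬝ᵥ μ := by rw [hO, Matrix.one_mulVec]
  have h2 : ∑ n, (O n) ⬝ᵥ (F *ᵥ (O n)) = μ ⬝ᵥ μ := by
    have : ∑ n, (O n) ⬝ᵥ (F *ᵥ (O n)) = (O * F * Oᵀ).trace := by
      simp [Matrix.trace, Matrix.diag, Matrix.mul_apply, dotProduct, mulVec,
        Finset.mul_sum, Finset.sum_mul]
      refine Finset.sum_congr rfl fun n _ => ?_
      rw [Finset.sum_comm]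
      refine Finset.sum_congr rfl fun i _ => Finset.sum_congr rfl fun j _ => ?_
      ring
    rw [this, Matrix.trace_mul_comm, ← Matrix.mul_assoc, hO, Matrix.one_mul]
    simp [Matrix.trace, Matrix.diag, hdiag, dotProduct, sq]
  have hsum : ∑ n, (((O n) ⬝ᵥ μ) ^ 2 - (O n) ⬝ᵥ (F *ᵥ (O n))) = 0 := by
    rw [Finset.sum_sub_distrib, h1, h2, sub_self]
  intro n
  have := (Finset.sum_eq_zero_iff_of_nonneg
    (fun i _ => sub_nonneg.mpr (hge i))).mp hsum n (Finset.mem_univ n)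
  linarith
end
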